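/- Let P be a positive homogeneous function with level set S and surface measure σ_P, and let E ∈ Exp(P). Given g : S → C, define f(x) = μ_P · χ_{(0,1)}(P(x)) g(P(x)^{-E} x) for x ≠ 0 and f(0) = 0. Then g is σ_P-integrable on S if and only if f is Lebesgue integrable on R^d, and in that case ∫_{R^d} f(x) dx = ∫_S g(η) σ_P(dη). -/

import Mathlib

open MeasureTheory Filter Set

/-- The continuous one-parameter group `T_r = r^E = exp((ln r) E)` generated by an
endomorphism `E` of `ℝ^d`. -/
noncomputable def Tgrp {d : ℕ} (E : EuclideanSpace ℝ (Fin d) →L[ℝ] EuclideanSpace ℝ (Fin d))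
    (r : ℝ) : EuclideanSpace ℝ (Fin d) →L[ℝ] EuclideanSpace ℝ (Fin d) :=
  NormedSpace.exp (Real.log r • E)

/-- The group `{T_r}` is contracting: `‖T_r‖ → 0` as `r → 0⁺` (operator norm). -/
def IsContracting {d : ℕ} (E : EuclideanSpace ℝ (Fin d) →L[ℝ] EuclideanSpace ℝ (Fin d)) : Prop :=
  Tendsto (fun r : ℝ => ‖Tgrp E r‖) (nhdsWithin 0 (Set.Ioi 0)) (nhds 0)


/-- `E` is an exponent of `P`: `P(r^E x) = r · P(x)` for all `r > 0` and `x ∈ ℝ^d`. -/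
def IsExpOf {d : ℕ} (P : EuclideanSpace ℝ (Fin d) → ℝ)
    (E : EuclideanSpace ℝ (Fin d) →L[ℝ] EuclideanSpace ℝ (Fin d)) : Prop :=
  ∀ r : ℝ, 0 < r → ∀ x : EuclideanSpace ℝ (Fin d), P (Tgrp E r x) = r * P x

/-- `P` is positive homogeneous: continuous, positive definite, possesses an exponent,
and `P(x) → ∞` as `|x| → ∞`. -/
def IsPosHom {d : ℕ} (P : EuclideanSpace ℝ (Fin d) → ℝ) : Prop :=
  Continuous P ∧ (∀ x, 0 ≤ P x) ∧ (∀ x, P x = 0 → x = 0) ∧ (∃ E, IsExpOf P E) ∧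
    Tendsto P (Filter.cocompact (EuclideanSpace ℝ (Fin d))) Filter.atTop

/-- For `F ⊆ ℝ^d`, the "contracted cone" `F̃ = { r^E η : 0 < r < 1, η ∈ F }`. -/
def Tilde {d : ℕ} (E : EuclideanSpace ℝ (Fin d) →L[ℝ] EuclideanSpace ℝ (Fin d))
    (F : Set (EuclideanSpace ℝ (Fin d))) : Set (EuclideanSpace ℝ (Fin d)) :=
  {x | ∃ r ∈ Set.Ioo (0:ℝ) 1, ∃ η ∈ F, Tgrp E r η = x}

/-!
Write `Φ x = P(x)^{-E} x` (`levelProj P E x`) and `A = {0 < P < 1}`. For `F ⊆ S` one has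
`F̃ = Φ⁻¹ F ∩ A`, so `σ_P` is the push-forward of `μ_P • volume|_A` under `Φ`, while
`f = μ_P · 1_A · (g ∘ Φ)`; both claims are the change of variables formula for this push-forward,
once two facts are known.

* `μ_P = tr E > 0` if `A ≠ ∅`. Since `det r^E = r^{tr E}`, `vol {P < r} = r^{tr E} vol {P < 1}`;
  for `tr E ≤ 0` this is at least `vol {P < 1}` when `r < 1`, which is absurd because `{P < 1}`
  has finite measure and contains the nonempty open set `{r < P < 1}`.
* `g` is `σ_P`-a.e. measurable as soon as `g ∘ Φ` is a.e. measurable on `A`. Let `h` be measurable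
  with `g ∘ Φ = h` on `A` off a null set `N`. Every `t^E` is a section of `Φ` over `S`, so
  `g = h ∘ t^E` off `{η ∈ S : t^E η ∈ N}`, a set of `σ_P`-measure `μ_P vol {x ∈ A : t^E Φ x ∈ N}`.
  This vanishes for almost every `t` by Fubini, because the invertible linear maps `s^E` preserve
  null sets, hence (Fubini again) almost every orbit `s ↦ s^E x` meets `N` in a null set of `s`.
-/

open scoped ENNReal

local notation "𝔼" d => EuclideanSpace ℝ (Fin d)

theorem eq_exp_of_map_add_eq_mul {D : ℝ → ℝ} {c : ℝ} (hmul : ∀ s u, D (s + u) = D s * D u)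
    (h0 : D 0 = 1) (hD : HasDerivAt D c 0) (t : ℝ) : D t = Real.exp (t * c) := by
  have hderiv : ∀ s, HasDerivAt D (D s * c) s := fun s => by
    have h : HasDerivAt D c (s - s) := by rwa [sub_self]
    refine ((h.comp_sub_const s s).const_mul (D s)).congr_of_eventuallyEq
      (Eventually.of_forall fun u => ?_)
    simp only [← hmul, add_sub_cancel]
  have hF : ∀ u, HasDerivAt (fun u => D u * Real.exp (-(u * c))) 0 u := fun u =>
    ((hderiv u).mul ((hasDerivAt_id u).mul_const c).neg.exp).congr_deriv (by simp; ring)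
  have h := is_const_of_deriv_eq_zero (fun u => (hF u).differentiableAt) (fun u => (hF u).deriv) t 0
  rwa [h0, zero_mul, neg_zero, Real.exp_zero, mul_one, Real.exp_neg, ← div_eq_mul_inv,
    div_eq_one_iff_eq (Real.exp_pos _).ne'] at h

theorem exp_add_smul {V : Type*} [NormedAddCommGroup V] [NormedSpace ℝ V] [CompleteSpace V]
    (A : V →L[ℝ] V) (s t : ℝ) :
    NormedSpace.exp ((s + t) • A) = NormedSpace.exp (s • A) * NormedSpace.exp (t • A) := by
  have hball : ∀ B : V →L[ℝ] V, B ∈ Metric.eball 0 (NormedSpace.expSeries ℝ (V →L[ℝ] V)).radius :=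
    fun B => (NormedSpace.expSeries_radius_eq_top ℝ (V →L[ℝ] V)).symm ▸ edist_lt_top _ _
  rw [add_smul, NormedSpace.exp_add_of_commute_of_mem_ball
    (((Commute.refl A).smul_left s).smul_right t) (hball _) (hball _)]

section DetExp

variable {ι : Type*} [Fintype ι] [DecidableEq ι]

noncomputable def Matrix.detRowCML : ContinuousMultilinearMap ℝ (fun _ : ι => ι → ℝ) ℝ where
  toMultilinearMap := (Matrix.detRowAlternating (n := ι) (R := ℝ)).toMultilinearMap
  cont := continuous_id.matrix_det

theorem Matrix.det_updateRow_one {R : Type*} [CommRing R] (i : ι) (v : ι → R) :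
    ((1 : Matrix ι ι R).updateRow i v).det = v i := by
  rw [← Matrix.det_transpose, ← Matrix.updateCol_transpose, Matrix.transpose_one,
    ← Matrix.cramer_apply, Matrix.cramer_one]
  rfl

theorem Matrix.hasDerivAt_det_of_eq_one {γ : ℝ → ι → ι → ℝ} {H : ι → ι → ℝ}
    (hγ : HasDerivAt γ H 0) (h0 : Matrix.of (γ 0) = 1) :
    HasDerivAt (fun t => (Matrix.of (γ t)).det) (Matrix.of H).trace 0 := by
  refine (((Matrix.detRowCML (ι := ι)).hasFDerivAt (γ 0)).comp_hasDerivAt 0 hγ).congr_deriv ?_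
  rw [ContinuousMultilinearMap.linearDeriv_apply]
  refine Finset.sum_congr rfl fun i _ => ?_
  change _ = H i i
  rw [← Matrix.det_updateRow_one i (H i), ← h0]
  rfl

variable {V : Type*} [NormedAddCommGroup V] [NormedSpace ℝ V] [FiniteDimensional ℝ V]

theorem hasDerivAt_det_exp_smul_zero (A : V →L[ℝ] V) :
    HasDerivAt (fun t : ℝ => LinearMap.det (NormedSpace.exp (t • A) : V →L[ℝ] V).toLinearMap)
      (LinearMap.trace ℝ V A) 0 := by
  let b := Module.finBasis ℝ V
  let M : (V →L[ℝ] V) →L[ℝ] (Fin (Module.finrank ℝ V) → Fin (Module.finrank ℝ V) → ℝ) :=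
    LinearMap.toContinuousLinearMap ((Matrix.ofLinearEquiv ℝ).symm.toLinearMap ∘ₗ
      (LinearMap.toMatrix b b).toLinearMap ∘ₗ ContinuousLinearMap.coeLM ℝ)
  have hexp : HasDerivAt (fun t : ℝ => NormedSpace.exp (t • A)) A 0 := by
    simpa using hasDerivAt_exp_smul_const (𝕂 := ℝ) A 0
  have h1 : Matrix.of (M 1) = 1 := by simp [M, Matrix.ofLinearEquiv]
  have :=
    Matrix.hasDerivAt_det_of_eq_one ((M.hasFDerivAt).comp_hasDerivAt 0 hexp) (by simpa using h1)
  simpa [M, Matrix.ofLinearEquiv, LinearMap.det_toMatrix, LinearMap.trace_eq_matrix_trace ℝ b]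
    using this

theorem det_exp_smul (A : V →L[ℝ] V) (t : ℝ) :
    LinearMap.det (NormedSpace.exp (t • A) : V →L[ℝ] V).toLinearMap =
      Real.exp (t * LinearMap.trace ℝ V A) := by
  refine eq_exp_of_map_add_eq_mul (fun s u => ?_) (by simp) (hasDerivAt_det_exp_smul_zero A) t
  rw [exp_add_smul]
  exact map_mul _ _ _

end DetExp

section Tgrp

variable {d : ℕ} (E : (𝔼 d) →L[ℝ] (𝔼 d))

theorem Tgrp_mul {r s : ℝ} (hr : 0 < r) (hs : 0 < s) : Tgrp E (r * s) = Tgrp E r * Tgrp E s := by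
  rw [Tgrp, Real.log_mul hr.ne' hs.ne', exp_add_smul]
  rfl

theorem Tgrp_one : Tgrp E 1 = 1 := by
  rw [Tgrp, Real.log_one, zero_smul ℝ E, NormedSpace.exp_zero]

theorem Tgrp_mul_apply {r s : ℝ} (hr : 0 < r) (hs : 0 < s) (x : 𝔼 d) :
    Tgrp E r (Tgrp E s x) = Tgrp E (r * s) x := by
  rw [Tgrp_mul E hr hs]
  rfl

theorem Tgrp_inv_apply_Tgrp {r : ℝ} (hr : 0 < r) (x : 𝔼 d) : Tgrp E r⁻¹ (Tgrp E r x) = x := by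
  rw [Tgrp_mul_apply E (inv_pos.2 hr) hr, inv_mul_cancel₀ hr.ne', Tgrp_one]
  rfl

theorem Tgrp_apply_Tgrp_inv {r : ℝ} (hr : 0 < r) (x : 𝔼 d) : Tgrp E r (Tgrp E r⁻¹ x) = x := by
  simpa using Tgrp_inv_apply_Tgrp E (inv_pos.2 hr) x

theorem det_Tgrp {r : ℝ} (hr : 0 < r) :
    LinearMap.det (Tgrp E r).toLinearMap = r ^ LinearMap.trace ℝ (𝔼 d) E := by
  rw [Tgrp, det_exp_smul, Real.rpow_def_of_pos hr]

theorem measurable_Tgrp_apply : Measurable fun p : ℝ × (𝔼 d) => Tgrp E p.1 p.2 := by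
  have hexp : Continuous (NormedSpace.exp : ((𝔼 d) →L[ℝ] (𝔼 d)) → _) :=
    continuous_iff_continuousAt.2 fun A => (NormedSpace.exp_analytic (𝕂 := ℝ) A).continuousAt
  have hT : Measurable fun p : ℝ × (𝔼 d) => Tgrp E p.1 :=
    hexp.measurable.comp ((Real.measurable_log.comp measurable_fst).smul_const E)
  exact isBoundedBilinearMap_apply.continuous.measurable.comp (hT.prodMk measurable_snd)

theorem ae_ae_Tgrp_apply_notMem {N : Set (𝔼 d)} (hN : MeasurableSet N) (hN0 : volume N = 0) :
    ∀ᵐ x : 𝔼 d, ∀ᵐ s : ℝ, 0 < s → Tgrp E s x ∉ N := by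
  rw [Measure.ae_ae_comm ((measurableSet_lt measurable_const measurable_snd).imp
    ((measurable_Tgrp_apply E).comp (measurable_snd.prodMk measurable_fst) hN.compl))]
  refine Eventually.of_forall fun s => ?_
  by_cases hs : 0 < s
  · have hpre : volume (Tgrp E s ⁻¹' N) = 0 := by
      rw [Measure.addHaar_preimage_continuousLinearMap _
        (by rw [det_Tgrp E hs]; exact (Real.rpow_pos_of_pos hs _).ne'), hN0, mul_zero]
    filter_upwards [measure_eq_zero_iff_ae_notMem.1 hpre] with x hx using fun _ => hx
  · exact Eventually.of_forall fun x h => absurd h hs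

end Tgrp

section LevelProj

variable {d : ℕ} {P : (𝔼 d) → ℝ} {E : (𝔼 d) →L[ℝ] (𝔼 d)}

noncomputable def levelProj (P : (𝔼 d) → ℝ) (E : (𝔼 d) →L[ℝ] (𝔼 d)) (x : 𝔼 d) : 𝔼 d :=
  Tgrp E (P x)⁻¹ x

theorem IsExpOf.map_zero (hE : IsExpOf P E) : P 0 = 0 := by
  have h := hE 2 two_pos 0
  rw [(Tgrp E 2).map_zero] at h
  linarith

theorem IsExpOf.levelProj_mem (hE : IsExpOf P E) {x : 𝔼 d} (hx : 0 < P x) :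
    P (levelProj P E x) = 1 := by
  rw [levelProj, hE _ (inv_pos.2 hx), inv_mul_cancel₀ hx.ne']

theorem IsExpOf.levelProj_Tgrp (hE : IsExpOf P E) {η : 𝔼 d} (hη : P η = 1) {r : ℝ} (hr : 0 < r) :
    levelProj P E (Tgrp E r η) = η := by
  rw [levelProj, hE r hr, hη, mul_one, Tgrp_inv_apply_Tgrp E hr]

theorem IsExpOf.tilde_inter_levelSet (hE : IsExpOf P E) (F : Set (𝔼 d)) :
    Tilde E (F ∩ {η | P η = 1}) = levelProj P E ⁻¹' F ∩ {x | P x ∈ Ioo 0 1} := by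
  ext x
  constructor
  · rintro ⟨r, hr, η, ⟨hηF, hη⟩, rfl⟩
    have hPx : P (Tgrp E r η) = r := by rw [hE r hr.1, hη, mul_one]
    exact ⟨by rwa [mem_preimage, hE.levelProj_Tgrp hη hr.1], by rwa [mem_ofPred_eq, hPx]⟩
  · rintro ⟨hxF, hx⟩
    exact ⟨P x, hx, levelProj P E x, ⟨hxF, hE.levelProj_mem hx.1⟩, Tgrp_apply_Tgrp_inv E hx.1 x⟩

theorem measurable_levelProj (hP : Measurable P) : Measurable (levelProj P E) :=
  (measurable_Tgrp_apply E).comp (hP.inv.prodMk measurable_id)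

theorem IsExpOf.image_Tgrp_setOf_lt_one (hE : IsExpOf P E) {r : ℝ} (hr : 0 < r) :
    Tgrp E r '' {x | P x < 1} = {x | P x < r} := by
  ext y
  constructor
  · rintro ⟨x, hx, rfl⟩
    rw [mem_ofPred_eq, hE r hr]
    exact mul_lt_of_lt_one_right hr hx
  · intro hy
    refine ⟨Tgrp E r⁻¹ y, ?_, Tgrp_apply_Tgrp_inv E hr y⟩
    rw [mem_ofPred_eq, hE _ (inv_pos.2 hr), inv_mul_lt_one₀ hr]
    exact hy

theorem IsExpOf.volume_setOf_lt (hE : IsExpOf P E) {r : ℝ} (hr : 0 < r) :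
    volume {x | P x < r} =
      ENNReal.ofReal (r ^ LinearMap.trace ℝ (𝔼 d) E) * volume {x | P x < 1} := by
  rw [← hE.image_Tgrp_setOf_lt_one hr, MeasureTheory.Measure.addHaar_image_continuousLinearMap,
    det_Tgrp E hr, abs_of_pos (Real.rpow_pos_of_pos hr _)]

theorem IsPosHom.isCompact_setOf_le (hP : IsPosHom P) (r : ℝ) : IsCompact {x | P x ≤ r} := by
  obtain ⟨K, hK, hKc⟩ := mem_cocompact.1 (hP.2.2.2.2.eventually (eventually_gt_atTop r))
  refine hK.of_isClosed_subset (isClosed_le hP.1 continuous_const) fun x hx => ?_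
  by_contra hxK
  exact absurd (show P x ≤ r from hx) (not_le.2 (show r < P x from hKc hxK))

theorem IsPosHom.trace_pos (hP : IsPosHom P) (hE : IsExpOf P E)
    (hA : {x | P x ∈ Ioo 0 1}.Nonempty) : 0 < LinearMap.trace ℝ (𝔼 d) E := by
  obtain ⟨x, hx0, hx1⟩ := hA
  set r := P x / 2
  have hr : 0 < r := half_pos hx0
  have hr1 : r < 1 := (half_lt_self hx0).trans hx1
  set C := {y | r < P y ∧ P y < 1}
  have hfin : volume {y | P y < 1} ≠ ∞ :=
    ((measure_mono fun y (hy : P y < 1) => hy.le).trans_lt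
      (hP.isCompact_setOf_le 1).measure_lt_top).ne
  have hpos : volume C ≠ 0 :=
    ((isOpen_lt continuous_const hP.1).inter (isOpen_lt hP.1 continuous_const)).measure_ne_zero
      volume ⟨x, half_lt_self hx0, hx1⟩
  have hsplit : volume {y | P y < r} + volume C ≤ volume {y | P y < 1} := by
    have hC : MeasurableSet C :=
      (measurableSet_lt measurable_const hP.1.measurable).inter
        (measurableSet_lt hP.1.measurable measurable_const)
    have hdisj : Disjoint {y | P y < r} C :=
      disjoint_left.2 fun y h1 h2 => (show P y < r from h1).not_gt h2.1
    rw [← measure_union hdisj hC]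
    exact measure_mono (union_subset (fun y (hy : P y < r) => hy.trans hr1) fun y hy => hy.2)
  by_contra hτ
  have hscale : volume {y | P y < 1} ≤ volume {y | P y < r} := by
    rw [hE.volume_setOf_lt hr]
    refine le_mul_of_one_le_left' ?_
    rw [← ENNReal.ofReal_one]
    exact ENNReal.ofReal_le_ofReal
      (Real.one_le_rpow_of_pos_of_le_one_of_nonpos hr hr1.le (not_lt.1 hτ))
  have h : volume {y | P y < 1} + volume C ≤ volume {y | P y < 1} + 0 := by
    rw [add_zero]
    exact (add_le_add_left hscale _).trans hsplit
  exact hpos (nonpos_iff_eq_zero.1 (ENNReal.le_of_add_le_add_left hfin h))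

theorem IsExpOf.eq_map_levelProj (hPm : Measurable P) (hE : IsExpOf P E) {σ : Measure (𝔼 d)}
    {c : ℝ≥0∞} (hσ : ∀ F, MeasurableSet F → σ F = c * volume (Tilde E (F ∩ {η | P η = 1}))) :
    σ = (c • volume.restrict {x | P x ∈ Ioo 0 1}).map (levelProj P E) := by
  ext F hF
  rw [Measure.map_apply (measurable_levelProj hPm) hF, hσ F hF, hE.tilde_inter_levelSet,
    Measure.smul_apply,
    Measure.restrict_apply' (show MeasurableSet {x | P x ∈ Ioo 0 1} from hPm measurableSet_Ioo),
    smul_eq_mul]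

theorem exists_ae_Tgrp_levelProj_notMem (hPm : Measurable P)
    {N : Set (𝔼 d)} (hN : MeasurableSet N) (hN0 : volume N = 0) :
    ∃ t ∈ Ioo (0 : ℝ) 1, ∀ᵐ x : 𝔼 d, 0 < P x → Tgrp E t (levelProj P E x) ∉ N := by
  have hmeas : MeasurableSet {p : ℝ × (𝔼 d) | 0 < p.1 → 0 < P p.2 →
      Tgrp E p.1 (levelProj P E p.2) ∉ N} :=
    (measurableSet_lt measurable_const measurable_fst).imp
      ((measurableSet_lt measurable_const (hPm.comp measurable_snd)).imp
        ((measurable_Tgrp_apply E).comp (measurable_fst.prodMk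
          ((measurable_levelProj hPm).comp measurable_snd)) hN.compl))
  have hae : ∀ᵐ t : ℝ, ∀ᵐ x : 𝔼 d, 0 < t → 0 < P x → Tgrp E t (levelProj P E x) ∉ N := by
    rw [Measure.ae_ae_comm hmeas]
    filter_upwards [ae_ae_Tgrp_apply_notMem E hN hN0] with x hx
    by_cases hPx : 0 < P x
    · filter_upwards [(Measure.quasiMeasurePreserving_smul volume
        (inv_ne_zero hPx.ne')).ae hx] with t ht htpos _
      rw [levelProj, Tgrp_mul_apply E htpos (inv_pos.2 hPx), mul_comm]
      exact ht (smul_pos (inv_pos.2 hPx) htpos)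
    · exact Eventually.of_forall fun t _ h => absurd h hPx
  have hIoo : volume (Ioo (0 : ℝ) 1) ≠ 0 := by simp
  obtain ⟨t, ht, htN⟩ := Measure.exists_mem_of_measure_ne_zero_of_ae hIoo (ae_restrict_of_ae hae)
  exact ⟨t, ht, htN.mono fun x h => h ht.1⟩

theorem IsExpOf.aestronglyMeasurable_of_comp_levelProj {β : Type*} [TopologicalSpace β]
    (hPm : Measurable P) (hE : IsExpOf P E) (c : ℝ≥0∞) {g : (𝔼 d) → β}
    (hg : AEStronglyMeasurable (g ∘ levelProj P E) (volume.restrict {x | P x ∈ Ioo 0 1})) :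
    AEStronglyMeasurable g ((c • volume.restrict {x | P x ∈ Ioo 0 1}).map (levelProj P E)) := by
  set A := {x : 𝔼 d | P x ∈ Ioo 0 1}
  have hA : MeasurableSet A := hPm measurableSet_Ioo
  obtain ⟨h, hh, hgh⟩ := hg
  obtain ⟨N, hbad, hN, hN0⟩ := exists_measurable_superset_of_null
    (ae_iff.1 ((ae_restrict_iff' hA).1 hgh))
  obtain ⟨t, ht, htN⟩ := exists_ae_Tgrp_levelProj_notMem (E := E) hPm hN hN0
  refine ⟨h ∘ Tgrp E t, hh.comp_measurable (Tgrp E t).continuous.measurable, ?_⟩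
  have hgood : ∀ᵐ η ∂(c • volume.restrict A).map (levelProj P E), P η = 1 ∧ Tgrp E t η ∉ N := by
    have hmeas : MeasurableSet {η | P η = 1 ∧ Tgrp E t η ∉ N} :=
      (hPm (measurableSet_singleton 1)).inter ((Tgrp E t).continuous.measurable hN.compl)
    refine (ae_map_iff (measurable_levelProj hPm).aemeasurable hmeas).2
      (Measure.ae_smul_measure ?_ c)
    filter_upwards [ae_restrict_mem hA, ae_restrict_of_ae htN] with x hx hxN
    exact ⟨hE.levelProj_mem hx.1, hxN hx.1⟩
  filter_upwards [hgood] with η ⟨hη, hηN⟩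
  have hPt : P (Tgrp E t η) = t := by rw [hE t ht.1, hη, mul_one]
  have hηA : Tgrp E t η ∈ A := by
    change P (Tgrp E t η) ∈ Ioo 0 1
    rwa [hPt]
  have hagree := of_not_not (fun hne => hηN (hbad hne)) hηA
  rwa [Function.comp_apply, hE.levelProj_Tgrp hη ht.1] at hagree

theorem IsExpOf.integrable_map_levelProj_iff {G : Type*} [NormedAddCommGroup G] {g : (𝔼 d) → G}
    (hPm : Measurable P) (hE : IsExpOf P E) {c : ℝ≥0∞} (hc0 : c ≠ 0) (hc : c ≠ ∞) :
    Integrable g ((c • volume.restrict {x | P x ∈ Ioo 0 1}).map (levelProj P E)) ↔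
      Integrable (g ∘ levelProj P E) (volume.restrict {x | P x ∈ Ioo 0 1}) := by
  have hΦ : AEMeasurable (levelProj P E) (c • volume.restrict {x | P x ∈ Ioo 0 1}) :=
    (measurable_levelProj hPm).aemeasurable
  refine ⟨fun hg => ?_, fun hg => ?_⟩
  · exact (integrable_smul_measure hc0 hc).1
      ((integrable_map_measure hg.aestronglyMeasurable hΦ).1 hg)
  · exact (integrable_map_measure (hE.aestronglyMeasurable_of_comp_levelProj hPm c
      hg.aestronglyMeasurable) hΦ).2 ((integrable_smul_measure hc0 hc).2 hg)

end LevelProj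

open scoped Classical

theorem IsExpOf.eq_indicator_of_eq_ite {d : ℕ} {P : EuclideanSpace ℝ (Fin d) → ℝ}
    {E : EuclideanSpace ℝ (Fin d) →L[ℝ] EuclideanSpace ℝ (Fin d)} (hE : IsExpOf P E)
    {G : Type*} [Zero G] {f a : EuclideanSpace ℝ (Fin d) → G}
    (hf : ∀ x, f x = if x = 0 then 0 else if P x ∈ Ioo 0 1 then a x else 0) :
    f = {x | P x ∈ Ioo 0 1}.indicator a := by
  funext x
  rw [hf x, indicator_apply]
  by_cases hx : P x ∈ Ioo 0 1
  · have hx0 : x ≠ 0 := by rintro rfl; simp [hE.map_zero] at hx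
    rw [if_neg hx0, if_pos hx, if_pos (show x ∈ {x | P x ∈ Ioo 0 1} from hx)]
  · rw [if_neg hx, if_neg (show x ∉ {x | P x ∈ Ioo 0 1} from hx), ite_self]

/-- Integration on `S`: with `f(x) = μ_P · χ_{(0,1)}(P(x)) · g(P(x)^{-E} x)` (and `f(0)=0`),
`g` is `σ_P`-integrable iff `f` is Lebesgue integrable, and then `∫ f dx = ∫_S g dσ_P`. -/
theorem integrate_on_S {d : ℕ}
    (P : EuclideanSpace ℝ (Fin d) → ℝ) (hP : IsPosHom P)
    (E : EuclideanSpace ℝ (Fin d) →L[ℝ] EuclideanSpace ℝ (Fin d)) (hE : IsExpOf P E)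
    (σ : Measure (EuclideanSpace ℝ (Fin d)))
    (hσ : ∀ F : Set (EuclideanSpace ℝ (Fin d)), MeasurableSet F →
      σ F = ENNReal.ofReal (LinearMap.trace ℝ (EuclideanSpace ℝ (Fin d))
          (E : EuclideanSpace ℝ (Fin d) →ₗ[ℝ] EuclideanSpace ℝ (Fin d))) *
        volume (Tilde E (F ∩ {η | P η = 1})))
    (g : EuclideanSpace ℝ (Fin d) → ℂ)
    (f : EuclideanSpace ℝ (Fin d) → ℂ)
    (hf : ∀ x : EuclideanSpace ℝ (Fin d), f x =
      if x = 0 then 0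
      else if P x ∈ Set.Ioo (0:ℝ) 1 then
        ((LinearMap.trace ℝ (EuclideanSpace ℝ (Fin d))
          (E : EuclideanSpace ℝ (Fin d) →ₗ[ℝ] EuclideanSpace ℝ (Fin d)) : ℝ) : ℂ) *
          g (Tgrp E (P x)⁻¹ x)
      else 0) :
    (Integrable g σ ↔ Integrable f volume) ∧
    (Integrable g σ → ∫ x, f x = ∫ η, g η ∂σ) := by
  set τ := LinearMap.trace ℝ (EuclideanSpace ℝ (Fin d)) E
  have hPm : Measurable P := hP.1.measurable
  have hA : MeasurableSet {x | P x ∈ Ioo 0 1} := hPm measurableSet_Ioo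
  obtain rfl := hE.eq_indicator_of_eq_ite hf
  obtain rfl := hE.eq_map_levelProj hPm hσ
  rcases eq_empty_or_nonempty {x | P x ∈ Ioo 0 1} with hA0 | hA0
  · rw [hA0]
    simp
  have hτ := hP.trace_pos hE hA0
  have hτC : IsUnit (τ : ℂ) := isUnit_iff_ne_zero.2 (by exact_mod_cast hτ.ne')
  refine ⟨?_, fun hg => ?_⟩
  · rw [hE.integrable_map_levelProj_iff hPm (ENNReal.ofReal_pos.2 hτ).ne' ENNReal.ofReal_ne_top,
      integrable_indicator_iff hA, IntegrableOn, integrable_const_mul_iff hτC]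
    rfl
  · rw [integral_indicator hA, integral_const_mul,
      integral_map (measurable_levelProj hPm).aemeasurable hg.aestronglyMeasurable,
      integral_smul_measure, ENNReal.toReal_ofReal hτ.le, Complex.real_smul]
    rfl
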